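/- arXiv:1105.4078 — 5 statements merged into one kernel-verified Lean document; each statement's English description precedes it below -/
import Mathlib

section
/- Let A be a cyclic n×n matrix over a field F with cyclic vector w, and suppose m_A(t) = f(t)·g(t) with f, g monic. Then the A-cyclic submodule generated by w·f(A) equals the null space (kernel) of g(A). -/
/-!
Since `w` is cyclic, every vector is `w p(A)` for some polynomial `p`, and `w p(A) = 0` only if
`p(A)` kills the whole space, i.e. only if `m_A ∣ p`. Hence `w p(A) ∈ ker g(A)` iff `f g ∣ p g`,
iff `f ∣ p`, iff `w p(A) = (w f(A)) r(A)` for some `r`, i.e. iff `w p(A) ∈ ⟨w f(A)⟩_A`.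
-/

/-- The `A`-cyclic submodule of `Fⁿ` (row vectors, with `A` acting on the right)
generated by a vector `v`: the span of `v, vA, vA², …`. -/
noncomputable def cyclicSpan {F : Type*} [Field F] {n : ℕ}
    (A : Matrix (Fin n) (Fin n) F) (v : Fin n → F) : Submodule F (Fin n → F) :=
  Submodule.span F (Set.range fun k : ℕ => Matrix.vecMul v (A ^ k))

open Matrix Polynomial

section

variable {F : Type*} [Field F] {n : ℕ} {A : Matrix (Fin n) (Fin n) F}

lemma vecMul_aeval_mul (v : Fin n → F) (p q : F[X]) :
    v ᵥ* aeval A (p * q) = v ᵥ* aeval A p ᵥ* aeval A q := by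
  rw [map_mul, vecMul_vecMul]

lemma mem_cyclicSpan_iff {v u : Fin n → F} :
    u ∈ cyclicSpan A v ↔ ∃ p : F[X], v ᵥ* aeval A p = u := by
  constructor
  · intro hu
    induction hu using Submodule.span_induction with
    | mem x hx =>
      obtain ⟨k, rfl⟩ := hx
      exact ⟨X ^ k, by simp⟩
    | zero => exact ⟨0, by simp⟩
    | add x y _ _ hx hy =>
      obtain ⟨p, rfl⟩ := hx
      obtain ⟨q, rfl⟩ := hy
      exact ⟨p + q, by simp [vecMul_add]⟩
    | smul c x _ hx =>
      obtain ⟨p, rfl⟩ := hx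
      exact ⟨c • p, by simp [vecMul_smul]⟩
  · rintro ⟨p, rfl⟩
    rw [aeval_eq_sum_range, vecMul_sum]
    refine Submodule.sum_mem _ fun k _ => ?_
    rw [vecMul_smul]
    exact Submodule.smul_mem _ _ (Submodule.subset_span ⟨k, rfl⟩)

variable {w : Fin n → F}

lemma exists_vecMul_aeval_eq (hw : cyclicSpan A w = ⊤) (u : Fin n → F) :
    ∃ p : F[X], w ᵥ* aeval A p = u :=
  mem_cyclicSpan_iff.1 (hw ▸ Submodule.mem_top)

lemma vecMul_aeval_eq_zero_iff (hw : cyclicSpan A w = ⊤) {p : F[X]} :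
    w ᵥ* aeval A p = 0 ↔ minpoly F A ∣ p := by
  refine ⟨fun hp => minpoly.dvd F A ?_, fun hp => by rw [minpoly.dvd_iff.1 hp, vecMul_zero]⟩
  refine ext_iff_vecMul.2 fun u => ?_
  obtain ⟨q, rfl⟩ := exists_vecMul_aeval_eq hw u
  -- polynomials in `A` commute, so `p(A)` kills `w q(A)` as it kills `w`
  rw [← vecMul_aeval_mul, mul_comm, vecMul_aeval_mul, hp, zero_vecMul, vecMul_zero]

lemma vecMul_aeval_eq_iff (hw : cyclicSpan A w = ⊤) {p q : F[X]} :
    w ᵥ* aeval A p = w ᵥ* aeval A q ↔ minpoly F A ∣ p - q := by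
  rw [← vecMul_aeval_eq_zero_iff hw, map_sub, vecMul_sub, sub_eq_zero]

end

theorem cyclicSpan_eq_ker_general {F : Type*} [Field F] {n : ℕ}
    (A : Matrix (Fin n) (Fin n) F) (w : Fin n → F)
    (hw : cyclicSpan A w = ⊤) (f g : Polynomial F) (hg : g.Monic)
    (hm : minpoly F A = f * g) :
    cyclicSpan A (Matrix.vecMul w (Polynomial.aeval A f)) =
      LinearMap.ker (Matrix.vecMulLinear (Polynomial.aeval A g)) := by
  ext v
  obtain ⟨p, rfl⟩ := exists_vecMul_aeval_eq hw v
  have hf : f ∣ minpoly F A := hm ▸ dvd_mul_right f g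
  rw [LinearMap.mem_ker, vecMulLinear_apply, ← vecMul_aeval_mul, vecMul_aeval_eq_zero_iff hw, hm,
    mul_dvd_mul_iff_right hg.ne_zero, mem_cyclicSpan_iff]
  constructor
  · rintro ⟨r, hr⟩
    rw [← vecMul_aeval_mul, vecMul_aeval_eq_iff hw] at hr
    exact (dvd_sub_left (dvd_mul_right f r)).1 (dvd_sub_comm.1 (hf.trans hr))
  · rintro ⟨r, rfl⟩
    exact ⟨r, (vecMul_aeval_mul w f r).symm⟩

theorem cyclicSpan_eq_ker {F : Type*} [Field F] {n : ℕ}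
    (A : Matrix (Fin n) (Fin n) F) (w : Fin n → F)
    (hw : cyclicSpan A w = ⊤) (f g : Polynomial F) (hf : f.Monic) (hg : g.Monic)
    (hm : minpoly F A = f * g) :
    cyclicSpan A (Matrix.vecMul w (Polynomial.aeval A f)) =
      LinearMap.ker (Matrix.vecMulLinear (Polynomial.aeval A g)) :=
  cyclicSpan_eq_ker_general A w hw f g hg hm
end

section
/- Let (w, A) be a cyclic pair on V = Fⁿ, let U be an A-invariant subspace of V of dimension r, and let c(t) be the characteristic polynomial of the induced map A|_{V/U}. Then w·c(A) is a cyclic vector for the restriction of A to U. -/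
/-!
Write `T` for `v ↦ vA` and `q(T)` for `v ↦ v q(A)`. Since every vector is `p(T) w` for some
polynomial `p`, the cyclic span of `c(T) w` is the range of `c(T)`. By Cayley–Hamilton on `V/U`
this range lies in `U`. Conversely, dividing `p` by the monic `c` shows
`V = range c(T) + span {w, wA, …, wA^(deg c - 1)}`, so the range has dimension at least
`n - deg c = dim U`.
-/

open Polynomial Module Submodule

section Quotient

variable {R M : Type*} [CommRing R] [AddCommGroup M] [Module R M]

theorem Submodule.mkQ_aeval_apply {f : Module.End R M} {U : Submodule R M}
    (hU : U ≤ U.comap f) (p : R[X]) (v : M) :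
    U.mkQ (aeval f p v) = aeval (U.mapQ U f hU) p (U.mkQ v) := by
  induction p using Polynomial.induction_on' with
  | add p q hp hq => simp only [map_add, LinearMap.add_apply, hp, hq]
  | monomial k a =>
    simp only [← smul_X_eq_monomial, map_smul, aeval_X_pow, LinearMap.smul_apply,
      ← U.mapQ_pow hU k, mkQ_apply, mapQ_apply]

theorem Submodule.aeval_charpoly_mapQ_apply_mem {f : Module.End R M} {U : Submodule R M}
    [Module.Free R (M ⧸ U)] [Module.Finite R (M ⧸ U)] (hU : U ≤ U.comap f) (v : M) :
    aeval f (U.mapQ U f hU).charpoly v ∈ U := by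
  rw [← Quotient.mk_eq_zero, ← mkQ_apply, mkQ_aeval_apply hU, LinearMap.aeval_self_charpoly,
    LinearMap.zero_apply]

end Quotient

namespace Matrix

variable {F : Type*} [Field F] {n : ℕ}

theorem transpose_aeval (A : Matrix (Fin n) (Fin n) F) (p : F[X]) :
    (aeval A p)ᵀ = aeval Aᵀ p := by
  induction p using Polynomial.induction_on' with
  | add p q hp hq => simp [hp, hq]
  | monomial k a => simp [← smul_X_eq_monomial, transpose_pow]

theorem toLinAlgEquiv'_transpose (A : Matrix (Fin n) (Fin n) F) :
    toLinAlgEquiv' Aᵀ = vecMulLinear A := by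
  ext
  simp [toLinAlgEquiv'_apply]

theorem vecMul_aeval (A : Matrix (Fin n) (Fin n) F) (p : F[X]) (v : Fin n → F) :
    v ᵥ* aeval A p = aeval (vecMulLinear A) p v := by
  rw [← toLinAlgEquiv'_transpose, aeval_algHom_apply, toLinAlgEquiv'_apply, ← transpose_aeval,
    mulVec_transpose]

theorem commute_aeval_self (A : Matrix (Fin n) (Fin n) F) (p : F[X]) : Commute A (aeval A p) := by
  simpa using (Commute.all X p).map (aeval A)

theorem vecMul_aeval_mem_span_of_degree_lt (A : Matrix (Fin n) (Fin n) F) (v : Fin n → F)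
    {p : F[X]} {d : ℕ} (hp : p.degree < d) :
    v ᵥ* aeval A p ∈ span F (Set.range fun i : Fin d => v ᵥ* (A ^ (i : ℕ))) := by
  rcases eq_or_ne p 0 with rfl | hp0
  · simp
  rw [aeval_eq_sum_range' ((natDegree_lt_iff_degree_lt hp0).mpr hp), vecMul_sum]
  refine sum_mem fun i hi => ?_
  rw [vecMul_smul]
  exact smul_mem _ _ (subset_span ⟨⟨i, Finset.mem_range.mp hi⟩, rfl⟩)

end Matrix

open Matrix

section Cyclic

variable {F : Type*} [Field F] {n : ℕ}

theorem cyclicSpan_vecMul_of_commute {A M : Matrix (Fin n) (Fin n) F} (h : Commute A M)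
    (v : Fin n → F) : cyclicSpan A (v ᵥ* M) = (cyclicSpan A v).map (vecMulLinear M) := by
  rw [cyclicSpan, cyclicSpan, map_span, ← Set.range_comp]
  congr 2
  ext k : 1
  simp [vecMul_vecMul, (h.pow_left k).eq]

theorem le_finrank_range_aeval_add_natDegree {A : Matrix (Fin n) (Fin n) F} {w : Fin n → F}
    (hw : cyclicSpan A w = ⊤) {q : F[X]} (hq : q.Monic) :
    n ≤ finrank F (LinearMap.range (vecMulLinear (aeval A q))) + q.natDegree := by
  set S := span F (Set.range fun i : Fin q.natDegree => w ᵥ* (A ^ (i : ℕ)))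
  have htop : ⊤ ≤ LinearMap.range (vecMulLinear (aeval A q)) ⊔ S := by
    rw [← hw, cyclicSpan, span_le]
    rintro _ ⟨k, rfl⟩
    change w ᵥ* A ^ k ∈ _
    have hdiv : w ᵥ* A ^ k =
        (w ᵥ* aeval A (X ^ k /ₘ q)) ᵥ* aeval A q + w ᵥ* aeval A (X ^ k %ₘ q) := by
      rw [vecMul_vecMul, ← vecMul_add, ← map_mul, ← map_add, mul_comm, add_comm,
        modByMonic_add_div, aeval_X_pow]
    rw [hdiv]
    exact add_mem_sup ⟨_, rfl⟩ (vecMul_aeval_mem_span_of_degree_lt A w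
      ((degree_modByMonic_lt _ hq).trans_eq (degree_eq_natDegree hq.ne_zero)))
  calc n = finrank F (⊤ : Submodule F (Fin n → F)) := by simp
    _ ≤ finrank F ↥(LinearMap.range (vecMulLinear (aeval A q)) ⊔ S) := finrank_mono htop
    _ ≤ finrank F (LinearMap.range (vecMulLinear (aeval A q))) + finrank F S :=
      finrank_add_le_finrank_add_finrank _ _
    _ ≤ _ := by
      gcongr
      exact (finrank_range_le_card _).trans_eq (Fintype.card_fin _)

end Cyclic

theorem cyclic_vector_restriction_general {F : Type*} [Field F] {n : ℕ}
    (A : Matrix (Fin n) (Fin n) F) (w : Fin n → F)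
    (hw : cyclicSpan A w = ⊤) (U : Submodule F (Fin n → F))
    (hU : U ≤ U.comap (Matrix.vecMulLinear A))
    (c : Polynomial F)
    (hc : c = LinearMap.charpoly (Submodule.mapQ U U (Matrix.vecMulLinear A) hU)) :
    cyclicSpan A (Matrix.vecMul w (Polynomial.aeval A c)) = U := by
  have hrange : LinearMap.range (vecMulLinear (aeval A c)) ≤ U := by
    rintro _ ⟨v, rfl⟩
    rw [vecMulLinear_apply, vecMul_aeval, hc]
    exact aeval_charpoly_mapQ_apply_mem hU v
  have hdim := le_finrank_range_aeval_add_natDegree hw (hc ▸ LinearMap.charpoly_monic _)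
  have hdeg : c.natDegree = finrank F ((Fin n → F) ⧸ U) := hc ▸ LinearMap.charpoly_natDegree _
  have hquot := U.finrank_quotient_add_finrank
  rw [finrank_fin_fun] at hquot
  rw [cyclicSpan_vecMul_of_commute (commute_aeval_self A c) w, hw, Submodule.map_top]
  exact eq_of_le_of_finrank_le hrange (by omega)

theorem cyclic_vector_restriction {F : Type*} [Field F] {n r : ℕ}
    (A : Matrix (Fin n) (Fin n) F) (w : Fin n → F)
    (hw : cyclicSpan A w = ⊤) (U : Submodule F (Fin n → F))
    (hU : U ≤ U.comap (Matrix.vecMulLinear A)) (hr : Module.finrank F U = r)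
    (c : Polynomial F)
    (hc : c = LinearMap.charpoly (Submodule.mapQ U U (Matrix.vecMulLinear A) hU)) :
    cyclicSpan A (Matrix.vecMul w (Polynomial.aeval A c)) = U :=
  cyclic_vector_restriction_general A w hw U hU c hc
end

section
/- Let A be a cyclic n×n matrix over a field F, let U be an A-invariant subspace, and let f be the monic divisor of m_A with m_A = f·g and U = ker g(A). Then the minimal polynomial of the restriction of A to U equals g. -/
/-!
Since `f * g` kills `A`, the operator `f(A)` maps everything into `U = ker g(A)`. Hence if `p` is
the minimal polynomial of `A` on `U`, then `p(A) f(A) = 0`, so `f * g ∣ f * p` and `g ∣ p`;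
conversely `p ∣ g` because `g(A)` vanishes on `U` by definition.
-/

open Polynomial Matrix

theorem minpoly_eq_of_aeval_eq_zero_iff {R A B : Type*} [CommRing R] [Ring A] [Ring B]
    [Algebra R A] [Algebra R B] {x : A} {y : B}
    (h : ∀ p : R[X], aeval x p = 0 ↔ aeval y p = 0) : minpoly R x = minpoly R y := by
  have hxy : IsIntegral R x ↔ IsIntegral R y := by
    simp only [IsIntegral, RingHom.IsIntegralElem, ← aeval_def, h]
  simp only [minpoly, ← aeval_def, h]
  split_ifs with hx hy hy
  · rfl
  · exact absurd (hxy.1 hx) hy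
  · exact absurd (hxy.2 hy) hx
  · rfl

namespace Matrix

variable {R n : Type*} [CommRing R] [Fintype n] [DecidableEq n]

theorem aeval_transpose (A : Matrix n n R) (p : R[X]) : aeval Aᵀ p = (aeval A p)ᵀ := by
  simpa [aeval_op_apply] using aeval_algHom_apply (transposeAlgEquiv n R R).toAlgHom A p

theorem minpoly_transpose (A : Matrix n n R) : minpoly R Aᵀ = minpoly R A :=
  minpoly_eq_of_aeval_eq_zero_iff fun p ↦ by rw [aeval_transpose, transpose_eq_zero]

theorem aeval_vecMulLinear (A : Matrix n n R) (p : R[X]) :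
    aeval A.vecMulLinear p = (aeval A p).vecMulLinear := by
  rw [← transpose_transpose A, vecMulLinear_transpose, aeval_transpose Aᵀ, vecMulLinear_transpose,
    ← toLin'_apply', ← toLin'_apply']
  exact aeval_algHom_apply toLinAlgEquiv'.toAlgHom Aᵀ p

theorem minpoly_vecMulLinear (A : Matrix n n R) : minpoly R A.vecMulLinear = minpoly R A := by
  rw [← mulVecLin_transpose, ← toLin'_apply', minpoly_toLin', minpoly_transpose]

end Matrix

namespace Module.End

variable {K M : Type*} [Field K] [AddCommGroup M] [Module K M]

theorem aeval_restrict_apply {φ : Module.End K M} {U : Submodule K M} (h : ∀ x ∈ U, φ x ∈ U)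
    (p : K[X]) (x : U) : (aeval (φ.restrict h) p x : M) = aeval φ p x := by
  induction p using Polynomial.induction_on' with
  | add p q hp hq => simp only [map_add, LinearMap.add_apply, Submodule.coe_add, hp, hq]
  | monomial k a =>
    simp only [aeval_monomial, ← smul_eq_mul, algebraMap_smul, LinearMap.smul_apply,
      SetLike.val_smul, pow_restrict k h, LinearMap.coe_restrict_apply]

theorem aeval_apply_mem_ker_of_minpoly_eq_mul {φ : Module.End K M} {f g : K[X]}
    (hm : minpoly K φ = f * g) (x : M) : aeval φ f x ∈ LinearMap.ker (aeval φ g) := by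
  rw [LinearMap.mem_ker, ← mul_apply, ← map_mul, mul_comm, ← hm, minpoly.aeval,
    LinearMap.zero_apply]

theorem minpoly_restrict_eq_of_eq_ker {φ : Module.End K M} {f g : K[X]} (hf : f ≠ 0)
    (hg : g.Monic) (hm : minpoly K φ = f * g) {U : Submodule K M}
    (hU : U = LinearMap.ker (aeval φ g)) (h : ∀ x ∈ U, φ x ∈ U) :
    minpoly K (φ.restrict h) = g := by
  subst hU
  set p := minpoly K (φ.restrict h)
  have hg_restrict : aeval (φ.restrict h) g = 0 := by
    ext x
    exact (aeval_restrict_apply h g x).trans (LinearMap.mem_ker.1 x.2)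
  have hp : aeval φ (p * f) = 0 := by
    ext x
    rw [map_mul, mul_apply,
      ← aeval_restrict_apply h p ⟨_, aeval_apply_mem_ker_of_minpoly_eq_mul hm x⟩, minpoly.aeval]
    rfl
  have hgp : g ∣ p := by
    rw [← mul_dvd_mul_iff_left hf, ← hm, mul_comm f]
    exact minpoly.dvd K φ hp
  exact eq_of_monic_of_associated (minpoly.monic ⟨g, hg, by rwa [← aeval_def]⟩) hg
    (associated_of_dvd_dvd (minpoly.dvd K _ hg_restrict) hgp)

end Module.End

theorem minpoly_restrict_ker_general {F : Type*} [Field F] {n : ℕ}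
    (A : Matrix (Fin n) (Fin n) F)
    (f g : Polynomial F) (hf : f.Monic) (hg : g.Monic)
    (hm : minpoly F A = f * g)
    (hU : ∀ x ∈ LinearMap.ker (Matrix.vecMulLinear (Polynomial.aeval A g)),
        Matrix.vecMulLinear A x ∈ LinearMap.ker (Matrix.vecMulLinear (Polynomial.aeval A g))) :
    minpoly F ((Matrix.vecMulLinear A).restrict hU) = g :=
  Module.End.minpoly_restrict_eq_of_eq_ker hf.ne_zero hg (by rw [minpoly_vecMulLinear, hm])
    (by rw [aeval_vecMulLinear]) hU

theorem minpoly_restrict_ker {F : Type*} [Field F] {n : ℕ}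
    (A : Matrix (Fin n) (Fin n) F) (hA : minpoly F A = A.charpoly)
    (f g : Polynomial F) (hf : f.Monic) (hg : g.Monic)
    (hm : minpoly F A = f * g)
    (hU : ∀ x ∈ LinearMap.ker (Matrix.vecMulLinear (Polynomial.aeval A g)),
        Matrix.vecMulLinear A x ∈ LinearMap.ker (Matrix.vecMulLinear (Polynomial.aeval A g))) :
    minpoly F ((Matrix.vecMulLinear A).restrict hU) = g :=
  minpoly_restrict_ker_general A f g hf hg hm hU
end

section
/- Let A ∈ M(n, F) act on V = Fⁿ and suppose V = ⊕_{i=1}^k V_i where each V_i is A-invariant. Let c_i and m_i be the characteristic and minimal polynomials of A restricted to V_i. Then A is cyclic if and only if each restriction A|_{V_i} is cyclic and gcd(c_i, c_j) = 1 for all i ≠ j. -/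
/-!
Let `m, c` be the minimal and characteristic polynomials of the endomorphism, and `mᵢ, cᵢ` those
of its restrictions to the summands. Then `mᵢ ∣ cᵢ`, `m` divides every common multiple of the `mᵢ`,
and `deg c = ∑ deg cᵢ`. If `mᵢ = cᵢ` and the `cᵢ` are pairwise coprime, then `∏ cᵢ ∣ m`, and
comparing degrees gives `m = c`. Conversely, if `m = c` then `c ∣ ∏ mᵢ ∣ ∏ cᵢ` forces
`∏ cᵢ = c` and `mᵢ = cᵢ`. For `i ≠ j`, `cᵢ cⱼ ∏_{l ≠ i, j} c_l = c` then divides the common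
multiple `lcm(cᵢ, cⱼ) ∏_{l ≠ i, j} c_l`, so `cᵢ cⱼ ∣ lcm(cᵢ, cⱼ)` and `gcd(cᵢ, cⱼ)` is a unit.
-/

open Polynomial Module
open scoped Matrix

section Divisibility

variable {ι α : Type*} [Fintype ι] [CommMonoidWithZero α]

theorem associated_of_forall_dvd_of_prod_dvd_prod [IsCancelMulZero α] {a b : ι → α}
    (hab : ∀ i, a i ∣ b i) (hba : ∏ i, b i ∣ ∏ i, a i) (ha : ∏ i, a i ≠ 0) (i : ι) :
    Associated (a i) (b i) := by
  choose u hu using hab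
  have hu_prod : ∏ l, u l ∣ 1 := by
    rw [← mul_dvd_mul_iff_left ha, mul_one, ← Finset.prod_mul_distrib]
    simpa only [← hu] using hba
  obtain ⟨v, hv⟩ :=
    isUnit_of_dvd_one ((Finset.dvd_prod_of_mem u (Finset.mem_univ i)).trans hu_prod)
  exact ⟨v, by rw [hv, hu]⟩

theorem isRelPrime_of_forall_dvd_imp_prod_dvd [GCDMonoid α] {c : ι → α} (hc : ∀ i, c i ≠ 0)
    (h : ∀ P, (∀ i, c i ∣ P) → ∏ i, c i ∣ P) {i j : ι} (hij : i ≠ j) :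
    IsRelPrime (c i) (c j) := by
  classical
  have : Nontrivial α := ⟨⟨c i, 0, hc i⟩⟩
  set Q := ∏ l ∈ (Finset.univ.erase i).erase j, c l
  have hj : j ∈ Finset.univ.erase i := Finset.mem_erase.2 ⟨hij.symm, Finset.mem_univ j⟩
  have hprod : ∏ l, c l = c i * c j * Q := by
    rw [← Finset.mul_prod_erase _ c (Finset.mem_univ i), ← Finset.mul_prod_erase _ c hj,
      mul_assoc]
  have hcommon : ∀ l, c l ∣ lcm (c i) (c j) * Q := by
    intro l
    by_cases hli : l = i
    · exact hli ▸ (dvd_lcm_left _ _).mul_right Q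
    by_cases hlj : l = j
    · exact hlj ▸ (dvd_lcm_right _ _).mul_right Q
    exact (Finset.dvd_prod_of_mem c (by simp [hli, hlj])).mul_left _
  have hQ : Q ≠ 0 := Finset.prod_ne_zero_iff.2 fun l _ => hc l
  have hdvd_lcm : c i * c j ∣ lcm (c i) (c j) :=
    (mul_dvd_mul_iff_right hQ).1 (hprod ▸ h _ hcommon)
  have hgcd : gcd (c i) (c j) ∣ 1 := by
    rw [← mul_dvd_mul_iff_right (lcm_ne_zero_iff.2 ⟨hc i, hc j⟩), one_mul]
    exact (gcd_mul_lcm _ _).dvd.trans hdvd_lcm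
  exact gcd_isUnit_iff_isRelPrime.1 (isUnit_of_dvd_one hgcd)

end Divisibility

theorem minpoly_op {K B : Type*} [Field K] [Ring B] [Algebra K B] {x : B} (hx : IsIntegral K x) :
    minpoly K (MulOpposite.op x) = minpoly K x := by
  have h_op : aeval (MulOpposite.op x) (minpoly K x) = 0 := by
    rw [aeval_op_apply, minpoly.aeval, MulOpposite.op_zero]
  refine (minpoly.unique _ _ (minpoly.monic hx) h_op fun q hq hqx => ?_).symm
  exact minpoly.min K x hq (MulOpposite.op_injective (by rw [← aeval_op_apply, hqx]; rfl))

theorem Matrix.minpoly_transpose_s10 {K n : Type*} [Field K] [Fintype n] [DecidableEq n]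
    (A : Matrix n n K) : minpoly K Aᵀ = minpoly K A := by
  rw [← minpoly_op (Matrix.isIntegral _),
    ← minpoly.algEquiv_eq (Matrix.transposeAlgEquiv n K K) A]
  rfl

namespace LinearMap

theorem aeval_restrict_apply {R M : Type*} [CommSemiring R] [AddCommMonoid M] [Module R M]
    {f : M →ₗ[R] M} {p : Submodule R M} (hf : ∀ x ∈ p, f x ∈ p) (q : R[X]) (x : p) :
    (aeval (f.restrict hf) q x : M) = aeval f q x := by
  induction q using Polynomial.induction_on' with
  | add a b ha hb => simp [ha, hb]
  | monomial n r => simp [aeval_monomial, Module.End.pow_restrict n hf, restrict_apply]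

variable {K M ι : Type*} [Field K] [AddCommGroup M] [Module K M] {f : M →ₗ[K] M}

theorem minpoly_restrict_dvd {p : Submodule K M} (hf : ∀ x ∈ p, f x ∈ p) :
    minpoly K (f.restrict hf) ∣ minpoly K f := by
  refine minpoly.dvd _ _ (LinearMap.ext fun x => Subtype.ext ?_)
  simp [aeval_restrict_apply]

theorem minpoly_dvd_of_forall_minpoly_restrict_dvd {N : ι → Submodule K M}
    (hN : ⨆ i, N i = ⊤) (hf : ∀ i, ∀ x ∈ N i, f x ∈ N i) {P : K[X]}
    (hP : ∀ i, minpoly K (f.restrict (hf i)) ∣ P) : minpoly K f ∣ P := by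
  refine minpoly.dvd _ _ (LinearMap.ker_eq_top.1 (eq_top_iff.2 (hN ▸ iSup_le fun i x hx => ?_)))
  obtain ⟨r, hr⟩ := hP i
  rw [mem_ker, ← aeval_restrict_apply (hf i) P ⟨x, hx⟩, hr, map_mul, Module.End.mul_apply,
    minpoly.aeval, zero_apply, ZeroMemClass.coe_zero]

theorem minpoly_dvd_prod_minpoly_restrict [Fintype ι] {N : ι → Submodule K M}
    (hN : ⨆ i, N i = ⊤) (hf : ∀ i, ∀ x ∈ N i, f x ∈ N i) :
    minpoly K f ∣ ∏ i, minpoly K (f.restrict (hf i)) :=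
  minpoly_dvd_of_forall_minpoly_restrict_dvd hN hf fun i =>
    Finset.dvd_prod_of_mem _ (Finset.mem_univ i)

variable [Fintype ι] [DecidableEq ι] [FiniteDimensional K M] {N : ι → Submodule K M}

theorem natDegree_prod_charpoly_restrict (hN : DirectSum.IsInternal N)
    (hf : ∀ i, ∀ x ∈ N i, f x ∈ N i) :
    (∏ i, (f.restrict (hf i)).charpoly).natDegree = f.charpoly.natDegree := by
  simp only [natDegree_prod_of_monic _ _ fun i _ => charpoly_monic _, charpoly_natDegree,
    ← Module.finrank_directSum]
  exact (LinearEquiv.ofBijective (DirectSum.coeLinearMap N) hN).finrank_eq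

/-- `minpoly K f ∣ ∏ mᵢ ∣ ∏ cᵢ`, and the outer two have the same degree. -/
theorem prod_charpoly_restrict_eq_minpoly_of_minpoly_eq_charpoly (hN : DirectSum.IsInternal N)
    (hf : ∀ i, ∀ x ∈ N i, f x ∈ N i) (h : minpoly K f = f.charpoly) :
    ∏ i, (f.restrict (hf i)).charpoly = minpoly K f := by
  have hprod_dvd : ∏ i, minpoly K (f.restrict (hf i)) ∣ ∏ i, (f.restrict (hf i)).charpoly :=
    Finset.prod_dvd_prod_of_dvd _ _ fun i _ => minpoly_dvd_charpoly _
  refine eq_of_monic_of_dvd_of_natDegree_le (minpoly.monic (isIntegral f))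
    (monic_prod_of_monic _ _ fun i _ => charpoly_monic _)
    ((minpoly_dvd_prod_minpoly_restrict hN.submodule_iSup_eq_top hf).trans hprod_dvd) ?_
  rw [natDegree_prod_charpoly_restrict hN hf, h]

theorem minpoly_restrict_eq_charpoly_of_minpoly_eq_charpoly (hN : DirectSum.IsInternal N)
    (hf : ∀ i, ∀ x ∈ N i, f x ∈ N i) (h : minpoly K f = f.charpoly) (i : ι) :
    minpoly K (f.restrict (hf i)) = (f.restrict (hf i)).charpoly := by
  have hprod_dvd : ∏ i, (f.restrict (hf i)).charpoly ∣ ∏ i, minpoly K (f.restrict (hf i)) :=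
    prod_charpoly_restrict_eq_minpoly_of_minpoly_eq_charpoly hN hf h ▸
      minpoly_dvd_prod_minpoly_restrict hN.submodule_iSup_eq_top hf
  exact eq_of_monic_of_associated (minpoly.monic (isIntegral _)) (charpoly_monic _)
    (associated_of_forall_dvd_of_prod_dvd_prod (fun i => minpoly_dvd_charpoly _) hprod_dvd
      (Finset.prod_ne_zero_iff.2 fun i _ => (minpoly.monic (isIntegral _)).ne_zero) i)

theorem isCoprime_charpoly_restrict_of_minpoly_eq_charpoly (hN : DirectSum.IsInternal N)
    (hf : ∀ i, ∀ x ∈ N i, f x ∈ N i) (h : minpoly K f = f.charpoly) {i j : ι}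
    (hij : i ≠ j) :
    IsCoprime (f.restrict (hf i)).charpoly (f.restrict (hf j)).charpoly := by
  classical
  refine (isRelPrime_of_forall_dvd_imp_prod_dvd (c := fun i => (f.restrict (hf i)).charpoly)
    (fun i => (charpoly_monic _).ne_zero) (fun P hP => ?_) hij).isCoprime
  rw [prod_charpoly_restrict_eq_minpoly_of_minpoly_eq_charpoly hN hf h]
  exact minpoly_dvd_of_forall_minpoly_restrict_dvd hN.submodule_iSup_eq_top hf
    fun i => (minpoly_dvd_charpoly _).trans (hP i)

theorem minpoly_eq_charpoly_of_restrict_of_isCoprime (hN : DirectSum.IsInternal N)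
    (hf : ∀ i, ∀ x ∈ N i, f x ∈ N i)
    (hmc : ∀ i, minpoly K (f.restrict (hf i)) = (f.restrict (hf i)).charpoly)
    (hcop : ∀ i j, i ≠ j →
      IsCoprime (f.restrict (hf i)).charpoly (f.restrict (hf j)).charpoly) :
    minpoly K f = f.charpoly := by
  have hprod_dvd : ∏ i, (f.restrict (hf i)).charpoly ∣ minpoly K f :=
    Finset.prod_dvd_of_coprime (fun i _ j _ hij => hcop i j hij)
      fun i _ => hmc i ▸ minpoly_restrict_dvd (hf i)
  refine (eq_of_monic_of_dvd_of_natDegree_le (minpoly.monic (isIntegral f)) (charpoly_monic f)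
    (minpoly_dvd_charpoly f) ?_).symm
  rw [← natDegree_prod_charpoly_restrict hN hf]
  exact natDegree_le_of_dvd hprod_dvd (minpoly.monic (isIntegral f)).ne_zero

theorem minpoly_eq_charpoly_iff_of_isInternal (hN : DirectSum.IsInternal N)
    (hf : ∀ i, ∀ x ∈ N i, f x ∈ N i) :
    minpoly K f = f.charpoly ↔
      (∀ i, minpoly K (f.restrict (hf i)) = (f.restrict (hf i)).charpoly) ∧
        ∀ i j, i ≠ j →
          IsCoprime (f.restrict (hf i)).charpoly (f.restrict (hf j)).charpoly :=
  ⟨fun h => ⟨minpoly_restrict_eq_charpoly_of_minpoly_eq_charpoly hN hf h,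
      fun _ _ => isCoprime_charpoly_restrict_of_minpoly_eq_charpoly hN hf h⟩,
    fun ⟨hmc, hcop⟩ => minpoly_eq_charpoly_of_restrict_of_isCoprime hN hf hmc hcop⟩

end LinearMap

theorem cyclic_iff_summands_cyclic_coprime {F : Type*} [Field F] {n k : ℕ}
    (A : Matrix (Fin n) (Fin n) F)
    (V : Fin k → Submodule F (Fin n → F)) (hV : DirectSum.IsInternal V)
    (hinv : ∀ i, ∀ x ∈ V i, Matrix.vecMulLinear A x ∈ V i) :
    (minpoly F A = A.charpoly) ↔
      ((∀ i, minpoly F ((Matrix.vecMulLinear A).restrict (hinv i)) =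
          LinearMap.charpoly ((Matrix.vecMulLinear A).restrict (hinv i))) ∧
       ∀ i j, i ≠ j →
         IsCoprime (LinearMap.charpoly ((Matrix.vecMulLinear A).restrict (hinv i)))
           (LinearMap.charpoly ((Matrix.vecMulLinear A).restrict (hinv j)))) := by
  have hmin : minpoly F A = minpoly F A.vecMulLinear := by
    rw [← Matrix.mulVecLin_transpose, ← Matrix.toLin'_apply', Matrix.minpoly_toLin',
      Matrix.minpoly_transpose_s10]
  have hchar : A.charpoly = A.vecMulLinear.charpoly := by
    rw [← Matrix.mulVecLin_transpose, Matrix.charpoly_mulVecLin, Matrix.charpoly_transpose]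
  rw [hmin, hchar]
  exact LinearMap.minpoly_eq_charpoly_iff_of_isInternal hV hinv
end

section
/- Let n = i·j, let p be a monic irreducible polynomial of degree i over F_q, and let A ∈ M(n, F_q) be a cyclic matrix with characteristic polynomial p^j. Then the centraliser of A in GL(n, F_q) has order q^{ij}·(1 − q^{−i}). -/
/-!
Let `q = |F|`. Since `minpoly A = charpoly A = p ^ j` with `p` irreducible, any vector not killed
by `p(A) ^ (j - 1)` is annihilated only by multiples of `p ^ j`, a polynomial of degree `n`; so it
is a cyclic vector for `A` and every matrix commuting with `A` is a polynomial in `A`. The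
centraliser of `A` in `GL(n, q)` is therefore the unit group of `F[X]/(p ^ j)`. This ring is
local: its non-units form the kernel of the reduction onto the field `F[X]/(p)` of order `q ^ i`,
so it has `q ^ (i (j - 1)) (q ^ i - 1)` units.
-/

open Polynomial

theorem RingHom.natCard_eq_natCard_ker_mul {R S F : Type*} [Ring R] [Ring S] [FunLike F R S]
    [RingHomClass F R S] (f : F) (hf : Function.Surjective f) :
    Nat.card R = Nat.card (RingHom.ker f) * Nat.card S := by
  have h := AddSubgroup.index_ker (f : R →+ S)
  rw [AddMonoidHom.range_eq_top.2 hf, AddSubgroup.card_top] at h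
  rw [← (RingHom.ker f).toAddSubgroup.card_mul_index]
  exact congrArg _ h

theorem natCard_units_eq_natCard_ker_mul {R L F : Type*} [CommRing R] [Finite R] [Field L]
    [FunLike F R L] [RingHomClass F R L] (ρ : F) [IsLocalHom ρ] (hρ : Function.Surjective ρ) :
    Nat.card Rˣ = Nat.card (RingHom.ker ρ) * (Nat.card L - 1) := by
  classical
  have : Fintype R := Fintype.ofFinite R
  have hunits : Nat.card Rˣ = Nat.card {x : R // ¬ρ x = 0} := by
    rw [← Nat.card_range_of_injective Units.val_injective]
    exact Nat.card_congr (Equiv.subtypeEquivRight fun x =>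
      (isUnit_map_iff ρ x).symm.trans isUnit_iff_ne_zero)
  rw [hunits, Nat.card_eq_fintype_card, Fintype.card_subtype_compl, ← Nat.card_eq_fintype_card,
    ← Nat.card_eq_fintype_card, RingHom.natCard_eq_natCard_ker_mul ρ hρ, Nat.mul_sub_one]
  rfl

namespace Module.End

theorem exists_eq_aeval_of_commute_of_surjective {R M : Type*} [CommRing R] [AddCommGroup M]
    [Module R M] {f g : Module.End R M} {v : M}
    (hv : Function.Surjective fun q : R[X] => aeval f q v) (hfg : Commute f g) :
    ∃ q : R[X], g = aeval f q := by
  obtain ⟨q, hq⟩ := hv (g v)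
  refine ⟨q, LinearMap.ext fun w => ?_⟩
  obtain ⟨r, rfl⟩ := hv w
  have hgr : Commute g (aeval f r) :=
    Algebra.commute_of_mem_adjoin_singleton_of_commute (aeval_mem_adjoin_singleton R f) hfg.symm
  calc g (aeval f r v) = aeval f r (g v) := LinearMap.congr_fun hgr v
    _ = aeval f r (aeval f q v) := by rw [← hq]
    _ = aeval f q (aeval f r v) := by
      rw [← Module.End.mul_apply, ← map_mul, mul_comm, map_mul, Module.End.mul_apply]

variable {K V : Type*} [Field K] [AddCommGroup V] [Module K V]

theorem pow_succ_dvd_of_aeval_apply_eq_zero {f : Module.End K V} {p : K[X]} (hp : Irreducible p)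
    {k : ℕ} (hpk : aeval f (p ^ (k + 1)) = 0) {v : V} (hv : aeval f (p ^ k) v ≠ 0) {q : K[X]}
    (hq : aeval f q v = 0) : p ^ (k + 1) ∣ q := by
  by_contra hdvd
  have hq0 : q ≠ 0 := by rintro rfl; exact hdvd (dvd_zero _)
  obtain ⟨m, r, hpr, rfl⟩ := WfDvdMonoid.max_power_factor hq0 hp
  have hmk : m ≤ k := by
    by_contra! h
    exact hdvd (dvd_mul_of_dvd_left (pow_dvd_pow p h) r)
  -- `r` is invertible modulo `p ^ (k + 1)`, so `p ^ m` already kills `v`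
  obtain ⟨a, b, hab⟩ := (hp.coprime_iff_not_dvd.2 hpr).pow_left (m := k + 1)
  have hm : aeval f (p ^ m) v = 0 := by
    have h1 : p ^ m = b * (p ^ m * r) + a * p ^ m * p ^ (k + 1) := by
      linear_combination (-p ^ m) * hab
    rw [h1, map_add, map_mul _ b, map_mul _ (a * p ^ m), hpk, mul_zero, LinearMap.add_apply,
      Module.End.mul_apply, hq, map_zero, LinearMap.zero_apply, add_zero]
  apply hv
  rw [← Nat.sub_add_cancel hmk, pow_add, map_mul, Module.End.mul_apply, hm, map_zero]

theorem exists_minpoly_dvd_of_minpoly_eq_pow {f : Module.End K V} {p : K[X]} (hp : Irreducible p)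
    {j : ℕ} (hf : minpoly K f = p ^ j) :
    ∃ v : V, ∀ q : K[X], aeval f q v = 0 → minpoly K f ∣ q := by
  rcases j with _ | k
  · exact ⟨0, fun q _ => hf ▸ (pow_zero p).symm ▸ one_dvd q⟩
  have hk : aeval f (p ^ k) ≠ 0 := fun h => by
    have := minpoly.dvd K f h
    rw [hf, pow_dvd_pow_iff hp.ne_zero hp.not_isUnit] at this
    omega
  obtain ⟨v, hv⟩ : ∃ v, aeval f (p ^ k) v ≠ 0 := by
    by_contra! h
    exact hk (LinearMap.ext h)
  exact ⟨v, fun q hq =>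
    hf ▸ pow_succ_dvd_of_aeval_apply_eq_zero hp (hf ▸ minpoly.aeval K f) hv hq⟩

theorem surjective_aeval_apply_of_minpoly_dvd [FiniteDimensional K V] {f : Module.End K V}
    (hdeg : (minpoly K f).natDegree = Module.finrank K V) {v : V}
    (hv : ∀ q : K[X], aeval f q v = 0 → minpoly K f ∣ q) :
    Function.Surjective fun q : K[X] => aeval f q v := by
  let L := (LinearMap.applyₗ v ∘ₗ (aeval f).toLinearMap).domRestrict
    (degreeLT K (Module.finrank K V))
  have hinj : Function.Injective L := by
    refine (injective_iff_map_eq_zero L).2 ?_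
    rintro ⟨q, hq⟩ h0
    suffices q = 0 from Subtype.ext this
    by_contra hq0
    have hlt : q.natDegree < (minpoly K f).natDegree := by
      rwa [hdeg, natDegree_lt_iff_degree_lt hq0, ← mem_degreeLT]
    exact hq0 (eq_zero_of_dvd_of_natDegree_lt (hv q h0) hlt)
  have hL : Function.Surjective L :=
    (LinearMap.injective_iff_surjective_of_finrank_eq_finrank
      ((degreeLTEquiv K _).finrank_eq.trans (Module.finrank_fin_fun K))).1 hinj
  exact fun w => let ⟨⟨q, _⟩, hq⟩ := hL w; ⟨q, hq⟩

theorem exists_eq_aeval_of_commute_of_minpoly_eq_pow [FiniteDimensional K V]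
    {f g : Module.End K V} {p : K[X]} (hp : Irreducible p) {j : ℕ} (hf : minpoly K f = p ^ j)
    (hdeg : (minpoly K f).natDegree = Module.finrank K V) (hfg : Commute f g) :
    ∃ q : K[X], g = aeval f q :=
  have ⟨_, hv⟩ := exists_minpoly_dvd_of_minpoly_eq_pow hp hf
  exists_eq_aeval_of_commute_of_surjective (surjective_aeval_apply_of_minpoly_dvd hdeg hv) hfg

end Module.End

theorem Matrix.exists_eq_aeval_of_commute_of_charpoly_eq_pow {K m : Type*} [Field K] [Fintype m]
    [DecidableEq m] {A B : Matrix m m K} {p : K[X]} (hp : Irreducible p) {j : ℕ}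
    (hA : minpoly K A = A.charpoly) (hch : A.charpoly = p ^ j) (hAB : Commute A B) :
    ∃ q : K[X], B = aeval A q := by
  have hmin : minpoly K (toLin' A) = p ^ j := by rw [minpoly_toLin', hA, hch]
  have hdeg : (minpoly K (toLin' A)).natDegree = Module.finrank K (m → K) := by
    rw [minpoly_toLin', hA, charpoly_natDegree_eq_dim, Module.finrank_fintype_fun_eq_card]
  obtain ⟨q, hq⟩ := Module.End.exists_eq_aeval_of_commute_of_minpoly_eq_pow hp hmin hdeg
    (hAB.map toLinAlgEquiv')
  refine ⟨q, toLinAlgEquiv'.injective ?_⟩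
  rw [← aeval_algHom_apply]
  exact hq

namespace AdjoinRoot

variable {K : Type*} [Field K]

section Lift

variable {M : Type*} [Ring M] [Algebra K M]

-- `AdjoinRoot.liftHom` requires a commutative target.
variable (K) in
noncomputable def liftMinpoly (a : M) : AdjoinRoot (minpoly K a) →ₐ[K] M :=
  Ideal.Quotient.liftₐ _ (aeval a) fun q hq => by
    obtain ⟨r, rfl⟩ := Ideal.mem_span_singleton'.1 hq
    rw [map_mul, minpoly.aeval, mul_zero]

theorem liftMinpoly_mk (a : M) (q : K[X]) : liftMinpoly K a (mk (minpoly K a) q) = aeval a q := rfl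

theorem liftMinpoly_injective (a : M) : Function.Injective (liftMinpoly K a) := by
  refine (injective_iff_map_eq_zero _).2 fun x hx => ?_
  obtain ⟨q, rfl⟩ := mk_surjective x
  rw [liftMinpoly_mk] at hx
  exact mk_eq_zero.2 (minpoly.dvd K a hx)

theorem natCard_units_commute_eq {a : M} (ha : ∀ b, Commute a b → ∃ q : K[X], b = aeval a q) :
    Nat.card {u : Mˣ // ↑u * a = a * ↑u} = Nat.card (AdjoinRoot (minpoly K a))ˣ := by
  have hrange : ∀ b, Commute a b → ∃ x, liftMinpoly K a x = b := fun b hb =>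
    let ⟨q, hq⟩ := ha b hb; ⟨mk _ q, (liftMinpoly_mk a q).trans hq.symm⟩
  have hcomm : ∀ x, Commute (liftMinpoly K a x) a := fun x => by
    obtain ⟨q, rfl⟩ := mk_surjective x
    rw [liftMinpoly_mk]
    exact (Algebra.commute_of_mem_adjoin_self (aeval_mem_adjoin_singleton K a)).symm
  let φ : AdjoinRoot (minpoly K a) →* M := liftMinpoly K a
  refine (Nat.card_eq_of_bijective (fun u => ⟨Units.map φ u, hcomm u⟩) ⟨?_, ?_⟩).symm
  · intro u v huv
    exact Units.ext (liftMinpoly_injective a (congrArg (fun w => ((w.1 : Mˣ) : M)) huv))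
  · rintro ⟨u, hu⟩
    obtain ⟨x, hx⟩ := hrange u hu.symm
    obtain ⟨y, hy⟩ := hrange ↑u⁻¹ (Commute.units_inv_right hu.symm)
    have hxy : x * y = 1 := liftMinpoly_injective a (by rw [map_mul, hx, hy, u.mul_inv, map_one])
    exact ⟨⟨x, y, hxy, mul_comm x y ▸ hxy⟩, Subtype.ext (Units.ext hx)⟩

end Lift

theorem algHomOfDvd_mk {f g : K[X]} (hgf : g ∣ f) (q : K[X]) :
    algHomOfDvd K f g hgf (mk f q) = mk g q := by
  rw [← aeval_eq, ← aeval_algHom_apply, algHomOfDvd_root, aeval_eq]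

theorem isLocalHom_algHomOfDvd_pow {p : K[X]} (hp : Irreducible p) {j : ℕ} (hj : j ≠ 0) :
    IsLocalHom (algHomOfDvd K (p ^ j) p (dvd_pow_self p hj)) where
  map_nonunit x hx := by
    obtain ⟨g, rfl⟩ := mk_surjective x
    have : Fact (Irreducible p) := ⟨hp⟩
    rw [algHomOfDvd_mk, isUnit_iff_ne_zero, Ne, mk_eq_zero] at hx
    obtain ⟨a, b, hab⟩ := (hp.coprime_iff_not_dvd.2 hx).pow_left (m := j)
    refine .of_mul_eq_one_right (mk _ b) ?_
    simpa [mk_self] using congrArg (mk (p ^ j)) hab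

theorem natCard_eq_pow_natDegree [Fintype K] {f : K[X]} (hf : f ≠ 0) :
    Nat.card (AdjoinRoot f) = Fintype.card K ^ f.natDegree := by
  have : Fintype (AdjoinRoot f) := Module.fintypeOfFintype (powerBasis hf).basis
  rw [Nat.card_eq_fintype_card, Module.card_eq_pow_finrank (K := K), (powerBasis hf).finrank,
    powerBasis_dim]

theorem natCard_units_pow [Fintype K] {p : K[X]} (hp : Irreducible p) {j : ℕ} (hj : j ≠ 0) :
    Nat.card (AdjoinRoot (p ^ j))ˣ =
      Fintype.card K ^ (p.natDegree * (j - 1)) * (Fintype.card K ^ p.natDegree - 1) := by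
  let ρ := algHomOfDvd K (p ^ j) p (dvd_pow_self p hj)
  have := isLocalHom_algHomOfDvd_pow hp hj
  have : Fact (Irreducible p) := ⟨hp⟩
  have hR := natCard_eq_pow_natDegree (K := K) (pow_ne_zero j hp.ne_zero)
  have hL := natCard_eq_pow_natDegree (K := K) hp.ne_zero
  have : Finite (AdjoinRoot (p ^ j)) := Nat.finite_of_card_ne_zero (by rw [hR]; positivity)
  have hρ : Function.Surjective ρ := fun y =>
    let ⟨g, hg⟩ := mk_surjective y; ⟨mk _ g, (algHomOfDvd_mk _ g).trans hg⟩
  have hker : Nat.card (RingHom.ker ρ) = Fintype.card K ^ (p.natDegree * (j - 1)) := by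
    have h := RingHom.natCard_eq_natCard_ker_mul ρ hρ
    rw [hR, hL, natDegree_pow] at h
    refine Nat.eq_of_mul_eq_mul_right (pow_pos (Fintype.card_pos (α := K)) p.natDegree) ?_
    obtain ⟨k, rfl⟩ := Nat.exists_eq_add_one_of_ne_zero hj
    rw [← h, ← pow_add, Nat.add_sub_cancel]
    ring
  rw [natCard_units_eq_natCard_ker_mul ρ hρ, hker, hL]

end AdjoinRoot

theorem card_centraliser_cyclic_primary_general {F : Type*} [Field F] [Fintype F]
    {n i j : ℕ} (hj : 0 < j)
    (p : Polynomial F) (hirr : Irreducible p) (hdeg : p.natDegree = i)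
    (A : Matrix (Fin n) (Fin n) F) (hA : minpoly F A = A.charpoly)
    (hch : A.charpoly = p ^ j) :
    Nat.card {B : (Matrix (Fin n) (Fin n) F)ˣ //
        (B : Matrix (Fin n) (Fin n) F) * A = A * (B : Matrix (Fin n) (Fin n) F)} =
      Fintype.card F ^ (i * (j - 1)) * (Fintype.card F ^ i - 1) := by
  rw [AdjoinRoot.natCard_units_commute_eq fun B =>
      Matrix.exists_eq_aeval_of_commute_of_charpoly_eq_pow hirr hA hch,
    hA, hch, AdjoinRoot.natCard_units_pow hirr hj.ne', hdeg]

theorem card_centraliser_cyclic_primary {F : Type*} [Field F] [Fintype F] [DecidableEq F]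
    {n i j : ℕ} (hn : n = i * j) (hj : 0 < j)
    (p : Polynomial F) (hp : p.Monic) (hirr : Irreducible p) (hdeg : p.natDegree = i)
    (A : Matrix (Fin n) (Fin n) F) (hA : minpoly F A = A.charpoly)
    (hch : A.charpoly = p ^ j) :
    Nat.card {B : (Matrix (Fin n) (Fin n) F)ˣ //
        (B : Matrix (Fin n) (Fin n) F) * A = A * (B : Matrix (Fin n) (Fin n) F)} =
      Fintype.card F ^ (i * (j - 1)) * (Fintype.card F ^ i - 1) :=
  card_centraliser_cyclic_primary_general hj p hirr hdeg A hA hch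
end
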